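/- Let σ₀ ≠ 0, μ₀ ∈ ℝ, and let h : ℝ → ℝ be continuously differentiable. Define ĝ₁₁(θ,x) = 1/σ₀ + (h(x − (μ₀/σ₀) sin θ) − 1/σ₀) cos²θ on (−π/2, π/2) × ℝ. Then ĝ₁₁ satisfies the transport equation σ₀ ∂ĝ₁₁/∂θ + μ₀ cos θ ∂ĝ₁₁/∂x + 2σ₀ tan θ · ĝ₁₁ − 2 tan θ = 0 at every point of (−π/2, π/2) × ℝ, and ĝ₁₁(0,x) = h(x) for all x. -/

import Mathlib

/-!
Along the characteristics `x − (μ₀/σ₀) sin θ = const` of the vector field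
`σ₀ ∂_θ + μ₀ cos θ ∂_x` the term `h(x − (μ₀/σ₀) sin θ)` is constant, so the transport
operator only sees the factor `cos²θ`. Its θ-derivative `−2 sin θ cos θ` is exactly cancelled
by the zeroth-order term `2 tan θ (σ₀ ĝ₁₁ − 1) = 2σ₀ tan θ (h − 1/σ₀) cos²θ`.
-/

noncomputable section

open Real Set

/-- Partial derivative in the `θ` (first) direction. -/
def pdth (f : ℝ × ℝ → ℝ) (p : ℝ × ℝ) : ℝ := fderiv ℝ f p (1, 0)

/-- Partial derivative in the `x` (second) direction. -/
def pdx (f : ℝ × ℝ → ℝ) (p : ℝ × ℝ) : ℝ := fderiv ℝ f p (0, 1)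

/-- The strip `(−π/2, π/2) × ℝ`. -/
def strip : Set (ℝ × ℝ) := Ioo (-(π / 2)) (π / 2) ×ˢ (univ : Set ℝ)

def characteristicProfile (a c : ℝ) (h : ℝ → ℝ) (p : ℝ × ℝ) : ℝ :=
  a + (h (p.2 - c * sin p.1) - a) * cos p.1 ^ 2

namespace characteristicProfile

open ContinuousLinearMap

variable {a c θ x : ℝ} {h : ℝ → ℝ}

theorem hasFDerivAt_comp_sub_mul_sin (hd : DifferentiableAt ℝ h (x - c * sin θ)) :
    HasFDerivAt (fun p : ℝ × ℝ => h (p.2 - c * sin p.1))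
      (deriv h (x - c * sin θ) • (snd ℝ ℝ ℝ - (c * cos θ) • fst ℝ ℝ ℝ)) (θ, x) := by
  have hsin : HasFDerivAt (fun p : ℝ × ℝ => sin p.1) (cos θ • fst ℝ ℝ ℝ) (θ, x) := by
    exact (hasDerivAt_sin θ).comp_hasFDerivAt (θ, x) (hasFDerivAt_fst (𝕜 := ℝ) (E := ℝ) (F := ℝ))
  have hchar : HasFDerivAt (fun p : ℝ × ℝ => p.2 - c * sin p.1)
      (snd ℝ ℝ ℝ - (c * cos θ) • fst ℝ ℝ ℝ) (θ, x) := by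
    refine (hasFDerivAt_snd.sub (hsin.const_mul c)).congr_fderiv ?_
    rw [smul_smul]
  exact hd.hasDerivAt.comp_hasFDerivAt (θ, x) hchar

theorem hasFDerivAt (hd : DifferentiableAt ℝ h (x - c * sin θ)) :
    HasFDerivAt (characteristicProfile a c h)
      ((-(c * cos θ ^ 3 * deriv h (x - c * sin θ))
          - 2 * (h (x - c * sin θ) - a) * cos θ * sin θ) • fst ℝ ℝ ℝ
        + (cos θ ^ 2 * deriv h (x - c * sin θ)) • snd ℝ ℝ ℝ) (θ, x) := by
  have hcos_sq : HasFDerivAt (fun p : ℝ × ℝ => cos p.1 ^ 2)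
      ((2 * cos θ * -sin θ) • fst ℝ ℝ ℝ) (θ, x) := by
    have hd : HasDerivAt (fun t => cos t ^ 2) (2 * cos θ * -sin θ) θ := by
      simpa using (hasDerivAt_cos θ).fun_pow 2
    exact hd.comp_hasFDerivAt (θ, x) (hasFDerivAt_fst (𝕜 := ℝ) (E := ℝ) (F := ℝ))
  refine ((((hasFDerivAt_comp_sub_mul_sin hd).sub_const a).mul hcos_sq).const_add a).congr_fderiv
    (ContinuousLinearMap.ext fun v => ?_)
  simp only [add_apply, smul_apply, sub_apply, coe_fst', coe_snd', smul_eq_mul]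
  ring

theorem pdth_eq (hd : DifferentiableAt ℝ h (x - c * sin θ)) :
    pdth (characteristicProfile a c h) (θ, x) =
      -(c * cos θ ^ 3 * deriv h (x - c * sin θ))
        - 2 * (h (x - c * sin θ) - a) * cos θ * sin θ := by
  simp [pdth, (hasFDerivAt hd).fderiv]

theorem pdx_eq (hd : DifferentiableAt ℝ h (x - c * sin θ)) :
    pdx (characteristicProfile a c h) (θ, x) = cos θ ^ 2 * deriv h (x - c * sin θ) := by
  simp [pdx, (hasFDerivAt hd).fderiv]

theorem transport {σ μ : ℝ} (hσ : σ ≠ 0) (hcos : cos θ ≠ 0)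
    (hd : DifferentiableAt ℝ h (x - μ / σ * sin θ)) :
    σ * pdth (characteristicProfile (1 / σ) (μ / σ) h) (θ, x)
        + μ * cos θ * pdx (characteristicProfile (1 / σ) (μ / σ) h) (θ, x)
        + 2 * σ * tan θ * characteristicProfile (1 / σ) (μ / σ) h (θ, x) - 2 * tan θ = 0 := by
  rw [pdth_eq hd, pdx_eq hd, characteristicProfile, tan_eq_sin_div_cos]
  field_simp
  ring

theorem apply_zero (x : ℝ) : characteristicProfile a c h (0, x) = h x := by
  simp [characteristicProfile]

end characteristicProfile

theorem statement5 (σ₀ μ₀ : ℝ) (hσ₀ : σ₀ ≠ 0)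
    (h : ℝ → ℝ) (hh : ContDiff ℝ 1 h)
    (G : ℝ × ℝ → ℝ)
    (hG : ∀ p : ℝ × ℝ, G p =
      1 / σ₀ + (h (p.2 - (μ₀ / σ₀) * Real.sin p.1) - 1 / σ₀) * Real.cos p.1 ^ 2) :
    (∀ p ∈ strip,
      σ₀ * pdth G p + μ₀ * Real.cos p.1 * pdx G p
        + 2 * σ₀ * Real.tan p.1 * G p - 2 * Real.tan p.1 = 0) ∧
    (∀ x : ℝ, G (0, x) = h x) := by
  obtain rfl : G = characteristicProfile (1 / σ₀) (μ₀ / σ₀) h := funext hG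
  refine ⟨?_, fun x => characteristicProfile.apply_zero x⟩
  rintro ⟨θ, x⟩ ⟨hθ, -⟩
  exact characteristicProfile.transport hσ₀ (cos_pos_of_mem_Ioo hθ).ne'
    (hh.differentiable one_ne_zero _)
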